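/- arXiv:2510.22478 — 3 statements merged into one kernel-verified Lean document; each statement's English description precedes it below -/
import Mathlib

section
/- Let d ≥ 2 and 0 < α' < π/2, and let C(α') = {y ∈ ℝ^d \ {0} : angle(y, e₁) ≤ α'/2} be the solid cone about the e₁-axis with apex angle α'. Fix x ∈ C(α'). Then there exists M = M(x, α') > 0 such that for all y, y' ∈ C(α') with ‖y - x‖ ≥ M and ‖y' - x‖ ≥ M, the angle between the vectors y - x and y' - x is at most 2^{10} · α'. -/
/-! Seen from `x`, a far point `z` points almost in the direction of `z` itself:
`angle (z - x) z ≤ α'` once `‖z - x‖` is large. The triangle inequality for angles along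
`y - x, y, e₁, y', y' - x` then bounds the angle by `α' + α'/2 + α'/2 + α' = 3α'`. -/

open MeasureTheory

/-- The first standard basis vector of `ℝ^d`. -/
noncomputable def e1 (d : ℕ) : EuclideanSpace ℝ (Fin d) :=
  WithLp.toLp 2 (fun (j : Fin d) => if (j : ℕ) = 0 then (1 : ℝ) else 0)

/-- The solid cone about the `e₁` axis with apex angle `α'`. -/
def cone (d : ℕ) (α' : ℝ) : Set (EuclideanSpace ℝ (Fin d)) :=
  {y | y ≠ 0 ∧ InnerProductGeometry.angle y (e1 d) ≤ α' / 2}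

namespace InnerProductGeometry

open Real

variable {V : Type*} [NormedAddCommGroup V] [InnerProductSpace ℝ V]

theorem div_le_cos_angle_add {v x : V} (hv : v ≠ 0) (hxv : ‖x‖ ≤ ‖v‖) :
    (‖v‖ - ‖x‖) / (‖v‖ + ‖x‖) ≤ cos (angle v (v + x)) := by
  have hv0 : 0 < ‖v‖ := norm_pos_iff.2 hv
  by_cases hvx : v + x = 0
  · have : ‖x‖ = ‖v‖ := by rw [eq_neg_of_add_eq_zero_right hvx, norm_neg]
    simp [hvx, this]
  have hvx0 : 0 < ‖v + x‖ := norm_pos_iff.2 hvx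
  have hinner : ‖v‖ * (‖v‖ - ‖x‖) ≤ inner ℝ v (v + x) := by
    rw [inner_add_right, real_inner_self_eq_norm_sq]
    nlinarith [neg_le_of_abs_le (abs_real_inner_le_norm v x)]
  rw [cos_angle, div_le_div_iff₀ (by positivity) (by positivity)]
  calc (‖v‖ - ‖x‖) * (‖v‖ * ‖v + x‖)
      ≤ (‖v‖ - ‖x‖) * (‖v‖ * (‖v‖ + ‖x‖)) := by
        gcongr _ * (_ * ?_)
        exact norm_add_le v x
    _ = ‖v‖ * (‖v‖ - ‖x‖) * (‖v‖ + ‖x‖) := by ring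
    _ ≤ inner ℝ v (v + x) * (‖v‖ + ‖x‖) := by gcongr

/-- The threshold `2‖x‖ / (1 - cos β)` makes `cos β ≤ (‖v‖ - ‖x‖) / (‖v‖ + ‖x‖)`. -/
theorem angle_add_le_of_lt_norm {v x : V} {β : ℝ} (hβ0 : 0 < β) (hβπ : β ≤ π)
    (hv : 2 * ‖x‖ / (1 - cos β) < ‖v‖) : angle v (v + x) ≤ β := by
  have hcos : cos β < 1 := by
    simpa using strictAntiOn_cos ⟨le_rfl, pi_pos.le⟩ ⟨hβ0.le, hβπ⟩ hβ0
  have hv' : 2 * ‖x‖ < ‖v‖ * (1 - cos β) := (div_lt_iff₀ (by linarith)).1 hv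
  have hxv : ‖x‖ ≤ ‖v‖ := by nlinarith [neg_one_le_cos β, norm_nonneg v]
  have hv0 : 0 < ‖v‖ := by nlinarith [norm_nonneg x]
  have hle : cos β ≤ (‖v‖ - ‖x‖) / (‖v‖ + ‖x‖) := by
    rw [le_div_iff₀ (by positivity)]
    nlinarith [cos_le_one β, norm_nonneg x]
  refine (strictAntiOn_cos.le_iff_ge ⟨hβ0.le, hβπ⟩ ⟨angle_nonneg _ _, angle_le_pi _ _⟩).1 ?_
  exact hle.trans (div_le_cos_angle_add (norm_pos_iff.1 hv0) hxv)

end InnerProductGeometry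

open InnerProductGeometry Real in
theorem cone_angle_lemma_general (d : ℕ) (α' : ℝ) (hα0 : 0 < α')
    (hαπ : α' < Real.pi / 2) (x : EuclideanSpace ℝ (Fin d)) :
    ∃ M : ℝ, 0 < M ∧ ∀ y ∈ cone d α', ∀ y' ∈ cone d α',
      M ≤ ‖y - x‖ → M ≤ ‖y' - x‖ →
      InnerProductGeometry.angle (y - x) (y' - x) ≤ 2 ^ 10 * α' := by
  set M := 2 * ‖x‖ / (1 - cos α')
  have hM : 0 ≤ M := div_nonneg (by positivity) (sub_nonneg.2 (cos_le_one α'))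
  refine ⟨M + 1, by linarith, fun y hy y' hy' hMy hMy' => ?_⟩
  have far : ∀ z, M + 1 ≤ ‖z - x‖ → angle (z - x) z ≤ α' := fun z hz => by
    have := angle_add_le_of_lt_norm (v := z - x) (x := x) hα0 (by linarith [pi_pos])
      (by linarith)
    rwa [sub_add_cancel] at this
  calc angle (y - x) (y' - x)
      ≤ angle (y - x) y + angle y (e1 d) + angle (e1 d) y' + angle y' (y' - x) := by
        linarith [angle_le_angle_add_angle (y - x) y (y' - x),
          angle_le_angle_add_angle y (e1 d) (y' - x), angle_le_angle_add_angle (e1 d) y' (y' - x)]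
    _ ≤ α' + α' / 2 + α' / 2 + α' := by
        gcongr
        exacts [far y hMy, hy.2, (angle_comm _ _).trans_le hy'.2,
          (angle_comm _ _).trans_le (far y' hMy')]
    _ ≤ 2 ^ 10 * α' := by linarith

/-- Cone-angle lemma: far from a fixed point `x` of a thin cone, any two points of the
cone are seen from `x` within a small angle. -/
theorem cone_angle_lemma (d : ℕ) (hd : 2 ≤ d) (α' : ℝ) (hα0 : 0 < α')
    (hαπ : α' < Real.pi / 2) (x : EuclideanSpace ℝ (Fin d)) (hx : x ∈ cone d α') :
    ∃ M : ℝ, 0 < M ∧ ∀ y ∈ cone d α', ∀ y' ∈ cone d α',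
      M ≤ ‖y - x‖ → M ≤ ‖y' - x‖ →
      InnerProductGeometry.angle (y - x) (y' - x) ≤ 2 ^ 10 * α' :=
  cone_angle_lemma_general d α' hα0 hαπ x
end

section
/- Let k ≥ 3 and let V = {p₁, …, p_k} ⊆ ℝ^d (d ≥ 2) be a k-point set containing no three collinear points. Then there exists a set E ⊆ ℝ^d with positive upper density such that for every x ∈ E there is R(x) > 0 with the property: for every r > R(x) there is no isometry O ∈ O(d) with x + r·O(V) ⊆ E. Equivalently, the pinned scaling factor set D_x^V(E) := {r > 0 : ∃ O ∈ O(d), x + r·O(V) ⊆ E} is bounded for every x ∈ E. -/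
/-!
Let `C` be the open cone `⋃_{t > 0} B(t u, ε t)` around a unit vector `u`. For every `R > 0` the
ball `B(0, R)` contains one of these balls of radius `ε R / (1 + ε)`, so `C` has positive upper
density. Every `p ∈ C` lies within `2ε‖p‖` of the line `ℝ u`, and points near a line nearly satisfy
the equality case of one triangle inequality: three points of `C` of norm at most `ρ` have
triangle defect at most `16ερ`. A copy `x + r O(V)` contains three non-collinear points of `V`
scaled by `r`, whose defect is `r γ` with `γ > 0`, while `ρ ≤ ‖x‖ + r M` where `M` bounds their
norms. Taking `32 ε (M + 1) ≤ γ` makes this impossible once `r > ‖x‖`.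
-/

open MeasureTheory Filter Metric
open scoped RealInnerProductSpace

noncomputable def upperDensity (d : ℕ) (S : Set (EuclideanSpace ℝ (Fin d))) : ℝ :=
  limsup (fun R : ℝ => (volume (S ∩ Metric.ball 0 R)).toReal / R ^ d) atTop

section TriangleDefect

variable {X : Type*} [PseudoMetricSpace X]

def triangleDefect (a b c : X) : ℝ :=
  min (dist a b + dist b c - dist a c)
    (min (dist b a + dist a c - dist b c) (dist a c + dist c b - dist a b))

theorem triangleDefect_image_of_dist_eq_mul {Y : Type*} [PseudoMetricSpace Y] {g : X → Y}
    {r : ℝ} (hr : 0 ≤ r) (hg : ∀ x y, dist (g x) (g y) = r * dist x y) (a b c : X) :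
    triangleDefect (g a) (g b) (g c) = r * triangleDefect a b c := by
  simp only [triangleDefect, hg, mul_min_of_nonneg _ _ hr]
  ring_nf

-- On the real line one of three points lies between the other two.
theorem triangleDefect_le_of_lipschitzWith {f : X → ℝ} (hf : LipschitzWith 1 f) {a b c : X}
    {δ : ℝ} (hab : dist a b ≤ |f a - f b| + δ) (hbc : dist b c ≤ |f b - f c| + δ)
    (hac : dist a c ≤ |f a - f c| + δ) :
    triangleDefect a b c ≤ 2 * δ := by
  have hlip : ∀ x y, |f x - f y| ≤ dist x y := fun x y => by
    simpa [Real.dist_eq] using hf.dist_le_mul x y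
  have := hlip a b; have := hlip b c; have := hlip a c
  unfold triangleDefect
  rw [dist_comm b a, dist_comm c b]
  rcases abs_cases (f a - f b) with ⟨h₁, _⟩ | ⟨h₁, _⟩ <;>
  rcases abs_cases (f b - f c) with ⟨h₂, _⟩ | ⟨h₂, _⟩ <;>
  rcases abs_cases (f a - f c) with ⟨h₃, _⟩ | ⟨h₃, _⟩ <;>
  simp only [h₁, h₂, h₃] at * <;>
  first
  | exact (min_le_left _ _).trans (by linarith)
  | exact (min_le_right _ _).trans ((min_le_left _ _).trans (by linarith))
  | exact (min_le_right _ _).trans ((min_le_right _ _).trans (by linarith))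

theorem dist_le_abs_sub_add_of_lipschitzWith {f : X → ℝ} (hf : LipschitzWith 1 f) {c c' : X}
    (hc : dist c c' = |f c - f c'|) (p q : X) :
    dist p q ≤ |f p - f q| + 2 * (dist p c + dist q c') := by
  have hlip : ∀ x y, |f x - f y| ≤ dist x y := fun x y => by
    simpa [Real.dist_eq] using hf.dist_le_mul x y
  have hcc' : |f c - f c'| ≤ |f p - f q| + dist p c + dist q c' := by
    have h₁ := hlip p c; have h₂ := hlip q c'
    rw [abs_le] at h₁ h₂ ⊢
    constructor <;> cases abs_cases (f p - f q) <;> linarith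
  have := dist_triangle4 p c c' q
  rw [dist_comm c' q] at this
  linarith

end TriangleDefect

theorem triangleDefect_pos_of_not_collinear {E : Type*} [NormedAddCommGroup E]
    [NormedSpace ℝ E] [StrictConvexSpace ℝ E] {a b c : E}
    (h : ¬ Collinear ℝ ({a, b, c} : Set E)) : 0 < triangleDefect a b c := by
  have excess_pos : ∀ x y z : E, ¬ Collinear ℝ ({x, y, z} : Set E) →
      0 < dist x y + dist y z - dist x z := fun x y z hxyz => by
    have := dist_triangle x y z
    have : dist x y + dist y z ≠ dist x z := fun heq =>
      hxyz (dist_add_dist_eq_iff.mp heq).collinear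
    exact lt_of_le_of_ne (by linarith) (by intro h0; apply this; linarith)
  have hbac : ¬ Collinear ℝ ({b, a, c} : Set E) := by rwa [Set.insert_comm]
  have hacb : ¬ Collinear ℝ ({a, c, b} : Set E) := by rwa [Set.pair_comm]
  exact lt_min (excess_pos a b c h) (lt_min (excess_pos b a c hbac) (excess_pos a c b hacb))

section NarrowCone

variable {X : Type*} [NormedAddCommGroup X] [InnerProductSpace ℝ X]

def narrowCone (u : X) (ε : ℝ) : Set X :=
  ⋃ (t : ℝ) (_ : 0 < t), ball (t • u) (ε * t)

theorem lipschitzWith_inner_left {u : X} (hu : ‖u‖ = 1) :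
    LipschitzWith 1 (fun p : X => ⟪u, p⟫) :=
  LipschitzWith.of_dist_le_mul fun p q => by
    simpa [Real.dist_eq, dist_eq_norm, ← inner_sub_right, hu] using
      abs_real_inner_le_norm u (p - q)

variable {u : X} {ε : ℝ}

theorem ball_subset_narrowCone_inter_ball (hu : ‖u‖ = 1) (hε : 0 ≤ ε) {R : ℝ} (hR : 0 < R) :
    ball ((R / (1 + ε)) • u) (ε / (1 + ε) * R) ⊆ narrowCone u ε ∩ ball 0 R := by
  have ht : 0 < R / (1 + ε) := by positivity
  have hrad : ε / (1 + ε) * R = ε * (R / (1 + ε)) := by ring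
  intro p hp
  refine ⟨Set.mem_biUnion (x := R / (1 + ε)) ht (hrad ▸ hp), ?_⟩
  rw [mem_ball, dist_zero_right]
  calc ‖p‖ ≤ ‖(R / (1 + ε)) • u‖ + dist p ((R / (1 + ε)) • u) := by
        rw [dist_eq_norm]; exact norm_le_norm_add_norm_sub' _ _
    _ < R / (1 + ε) + ε / (1 + ε) * R := by
        rw [norm_smul, hu, Real.norm_of_nonneg ht.le, mul_one]; exact add_lt_add_right (mem_ball.mp hp) _
    _ = R := by field_simp

theorem exists_dist_smul_le_of_mem_narrowCone (hu : ‖u‖ = 1) (hε : ε ≤ 1 / 2) {p : X}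
    (hp : p ∈ narrowCone u ε) : ∃ t : ℝ, dist p (t • u) ≤ 2 * ε * ‖p‖ := by
  simp only [narrowCone, Set.mem_iUnion, mem_ball] at hp
  obtain ⟨t, ht, hpt⟩ := hp
  refine ⟨t, hpt.le.trans ?_⟩
  have : ‖t • u‖ ≤ ‖p‖ + dist p (t • u) := by
    rw [dist_eq_norm, norm_sub_rev]
    exact norm_le_norm_add_norm_sub' _ _
  rw [norm_smul, hu, Real.norm_of_nonneg ht.le, mul_one] at this
  have hε₀ : 0 < ε := pos_of_mul_pos_left (dist_nonneg.trans_lt hpt) ht.le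
  have : t ≤ 2 * ‖p‖ := by nlinarith
  nlinarith

theorem dist_le_abs_inner_sub_add_of_mem_narrowCone (hu : ‖u‖ = 1) (hε₀ : 0 ≤ ε)
    (hε : ε ≤ 1 / 2) {p q : X} (hp : p ∈ narrowCone u ε) (hq : q ∈ narrowCone u ε) {ρ : ℝ}
    (hpρ : ‖p‖ ≤ ρ) (hqρ : ‖q‖ ≤ ρ) :
    dist p q ≤ |⟪u, p⟫ - ⟪u, q⟫| + 8 * ε * ρ := by
  obtain ⟨t, hpt⟩ := exists_dist_smul_le_of_mem_narrowCone hu hε hp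
  obtain ⟨s, hqs⟩ := exists_dist_smul_le_of_mem_narrowCone hu hε hq
  have hts : dist (t • u) (s • u) = |⟪u, t • u⟫ - ⟪u, s • u⟫| := by
    simp [dist_eq_norm, ← sub_smul, norm_smul, hu, real_inner_smul_right]
  have := dist_le_abs_sub_add_of_lipschitzWith (lipschitzWith_inner_left hu) hts p q
  nlinarith

theorem triangleDefect_le_of_mem_narrowCone (hu : ‖u‖ = 1) (hε₀ : 0 ≤ ε) (hε : ε ≤ 1 / 2)
    {a b c : X} (ha : a ∈ narrowCone u ε) (hb : b ∈ narrowCone u ε) (hc : c ∈ narrowCone u ε)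
    {ρ : ℝ} (haρ : ‖a‖ ≤ ρ) (hbρ : ‖b‖ ≤ ρ) (hcρ : ‖c‖ ≤ ρ) :
    triangleDefect a b c ≤ 16 * ε * ρ := by
  have := triangleDefect_le_of_lipschitzWith (lipschitzWith_inner_left hu)
    (dist_le_abs_inner_sub_add_of_mem_narrowCone hu hε₀ hε ha hb haρ hbρ)
    (dist_le_abs_inner_sub_add_of_mem_narrowCone hu hε₀ hε hb hc hbρ hcρ)
    (dist_le_abs_inner_sub_add_of_mem_narrowCone hu hε₀ hε ha hc haρ hcρ)
  linarith

end NarrowCone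

theorem upperDensity_pos_of_ball_subset {d : ℕ} {S : Set (EuclideanSpace ℝ (Fin d))} {c : ℝ}
    (hc : 0 < c) (h : ∀ R > 0, ∃ z, ball z (c * R) ⊆ S ∩ ball 0 R) : 0 < upperDensity d S := by
  set B := (volume (ball (0 : EuclideanSpace ℝ (Fin d)) 1)).toReal
  have hB : 0 < B := ENNReal.toReal_pos (measure_ball_pos _ _ one_pos).ne' measure_ball_lt_top.ne
  have hvol : ∀ z : EuclideanSpace ℝ (Fin d), ∀ ρ > 0, (volume (ball z ρ)).toReal = ρ ^ d * B := fun z ρ hρ => by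
    rw [Measure.addHaar_ball_of_pos volume z hρ, finrank_euclideanSpace_fin, ENNReal.toReal_mul,
      ENNReal.toReal_ofReal (by positivity)]
  have hupper : ∀ᶠ R in atTop, (volume (S ∩ ball 0 R)).toReal / R ^ d ≤ B := by
    filter_upwards [eventually_gt_atTop 0] with R hR
    rw [div_le_iff₀ (by positivity), mul_comm, ← hvol 0 R hR]
    exact ENNReal.toReal_mono measure_ball_lt_top.ne (measure_mono Set.inter_subset_right)
  have hlower : ∀ᶠ R in atTop, c ^ d * B ≤ (volume (S ∩ ball 0 R)).toReal / R ^ d := by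
    filter_upwards [eventually_gt_atTop 0] with R hR
    obtain ⟨z, hz⟩ := h R hR
    rw [le_div_iff₀ (by positivity), mul_right_comm, ← mul_pow, ← hvol z _ (by positivity)]
    exact ENNReal.toReal_mono
      ((measure_mono Set.inter_subset_right).trans_lt measure_ball_lt_top).ne (measure_mono hz)
  exact (by positivity : 0 < c ^ d * B).trans_le
    (le_limsup_of_frequently_le hlower.frequently (isBoundedUnder_of_eventually_le hupper))

/-- Theorem 1 (avoidance): for every `k`-point pattern `V` with no three collinear
points there is a set `E` of positive upper density such that, for every `x ∈ E`,
all sufficiently large pinned affine (isometric) copies of `V` based at `x` avoid `E`;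
i.e. the pinned scaling factor set is bounded at every pin. -/
theorem pattern_avoidance (d k : ℕ) (hd : 2 ≤ d) (hk : 3 ≤ k)
    (V : Set (EuclideanSpace ℝ (Fin d))) (hVfin : V.Finite) (hVcard : V.ncard = k)
    (hVnocol : ∀ p ∈ V, ∀ q ∈ V, ∀ s ∈ V, p ≠ q → p ≠ s → q ≠ s →
      ¬ Collinear ℝ ({p, q, s} : Set (EuclideanSpace ℝ (Fin d)))) :
    ∃ E : Set (EuclideanSpace ℝ (Fin d)), 0 < upperDensity d E ∧
      ∀ x ∈ E, ∃ R : ℝ, 0 < R ∧ ∀ r : ℝ, R < r →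
        ∀ O : EuclideanSpace ℝ (Fin d) ≃ₗᵢ[ℝ] EuclideanSpace ℝ (Fin d),
          ¬ (∀ v ∈ V, x + r • O v ∈ E) := by
  obtain ⟨v₁, hv₁, v₂, hv₂, v₃, hv₃, h₁₂, h₁₃, h₂₃⟩ := (Set.two_lt_ncard hVfin).mp (by omega)
  set γ := triangleDefect v₁ v₂ v₃
  have hγ : 0 < γ := triangleDefect_pos_of_not_collinear (hVnocol v₁ hv₁ v₂ hv₂ v₃ hv₃ h₁₂ h₁₃ h₂₃)
  set M := ‖v₁‖ + ‖v₂‖ + ‖v₃‖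
  set ε := min (1 / 2) (γ / (32 * (M + 1)))
  have hε₀ : 0 < ε := lt_min (by norm_num) (by positivity)
  have hεγ : 32 * (M + 1) * ε ≤ γ := by
    rw [mul_comm, ← le_div_iff₀ (by positivity)]; exact min_le_right _ _
  set u : EuclideanSpace ℝ (Fin d) := EuclideanSpace.single ⟨0, by omega⟩ 1
  have hu : ‖u‖ = 1 := by simp [u]
  refine ⟨narrowCone u ε, upperDensity_pos_of_ball_subset (by positivity)
    fun R hR => ⟨_, ball_subset_narrowCone_inter_ball hu hε₀.le hR⟩, fun x _ => ?_⟩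
  refine ⟨‖x‖ + 1, by positivity, fun r hr O hO => ?_⟩
  have hr₀ : 0 ≤ r := by linarith [norm_nonneg x]
  have hnorm : ∀ v, ‖v‖ ≤ M → ‖x + r • O v‖ ≤ ‖x‖ + r * M := fun v hv =>
    calc ‖x + r • O v‖ ≤ ‖x‖ + ‖r • O v‖ := norm_add_le _ _
      _ = ‖x‖ + r * ‖v‖ := by rw [norm_smul, O.norm_map, Real.norm_of_nonneg hr₀]
      _ ≤ ‖x‖ + r * M := by gcongr
  have hM : ‖v₁‖ ≤ M ∧ ‖v₂‖ ≤ M ∧ ‖v₃‖ ≤ M := by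
    refine ⟨?_, ?_, ?_⟩ <;> linarith [norm_nonneg v₁, norm_nonneg v₂, norm_nonneg v₃]
  have hscale : triangleDefect (x + r • O v₁) (x + r • O v₂) (x + r • O v₃) = r * γ :=
    triangleDefect_image_of_dist_eq_mul (g := fun v => x + r • O v) hr₀ (fun a b => by
      rw [dist_add_left, dist_smul₀, Real.norm_of_nonneg hr₀, O.dist_map]) _ _ _
  have hflat := triangleDefect_le_of_mem_narrowCone hu hε₀.le (min_le_left _ _)
    (hO v₁ hv₁) (hO v₂ hv₂) (hO v₃ hv₃) (hnorm v₁ hM.1) (hnorm v₂ hM.2.1) (hnorm v₃ hM.2.2)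
  rw [hscale] at hflat
  have hrγ : 0 < r * γ := mul_pos (by linarith [norm_nonneg x]) hγ
  have : 16 * ε * (‖x‖ + r * M) < r * γ :=
    calc 16 * ε * (‖x‖ + r * M) < 16 * ε * (r * (M + 1)) := by gcongr; linarith
      _ ≤ r * γ / 2 := by nlinarith
      _ < r * γ := by linarith
  linarith
end

section
/- Let N ≥ 2 and suppose r(N) is an upper bound for the size of any subset of ℤ/Nℤ containing no (k−1)-term arithmetic progression. If E ⊆ ℝ/2πℤ is measurable and for every x ∈ ℝ/2πℤ and every i ∈ {1,…,N−1} the set {x + j·2πi/N : j = 0,…,k−2} is not contained in E (with N prime so these points are distinct), then L¹(E) ≤ (2π/N)·r(N). -/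
/-!
Average over the `N` rotations by multiples of `2π/N`. For each `x`, the set of `t ∈ ℤ/Nℤ` with
`x + 2πt/N ∈ E` contains no `(k-1)`-term progression, since such a progression would be one in `E`
with gap a multiple of `2π/N`; so it has at most `r` elements. Integrating this count over the
circle and using rotation invariance of Lebesgue measure gives `N · L¹(E) ≤ r · 2π`.
-/

open MeasureTheory

instance : Fact (0 < 2 * Real.pi) := ⟨by positivity⟩

open Finset

theorem card_mul_measure_le_of_forall_card_translates_le {G ι : Type*} [MeasurableSpace G]
    [AddGroup G] [MeasurableAdd G] (μ : Measure G) [μ.IsAddRightInvariant] [Fintype ι]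
    (g : ι → G) {E : Set G} [DecidablePred (· ∈ E)] (hE : MeasurableSet E) {r : ℕ}
    (h : ∀ x, #{i | x + g i ∈ E} ≤ r) :
    Fintype.card ι * μ E ≤ r * μ Set.univ := by
  have hmeas (i : ι) : MeasurableSet ((· + g i) ⁻¹' E) := measurable_add_const (g i) hE
  calc (Fintype.card ι : ENNReal) * μ E = ∑ i, μ ((· + g i) ⁻¹' E) := by
        simp [measure_preimage_add_right]
    _ = ∫⁻ x, ∑ i, ((· + g i) ⁻¹' E).indicator 1 x ∂μ := by
        rw [lintegral_finsetSum _ fun i _ => measurable_one.indicator (hmeas i)]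
        simp only [lintegral_indicator_one (hmeas _)]
    _ = ∫⁻ x, (#{i | x + g i ∈ E} : ENNReal) ∂μ := by
        congr 1 with x
        rw [Finset.card_filter, Nat.cast_sum]
        refine Finset.sum_congr rfl fun i _ => ?_
        by_cases hi : x + g i ∈ E <;> simp [hi]
    _ ≤ ∫⁻ _, (r : ENNReal) ∂μ := lintegral_mono fun x => Nat.cast_le.mpr (h x)
    _ = r * μ Set.univ := lintegral_const _

def ZMod.ContainsAP {N : ℕ} (m : ℕ) (B : Finset (ZMod N)) : Prop :=
  ∃ a δ : ZMod N, δ ≠ 0 ∧ Function.Injective (fun j : Fin m => a + (j : ℕ) • δ) ∧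
    ∀ j : Fin m, a + (j : ℕ) • δ ∈ B

theorem ZMod.not_containsAP_filter_translate_mem {N : ℕ} [NeZero N] {G : Type*} [AddCommGroup G]
    (φ : ZMod N →+ G) {m : ℕ} {E : Set G} [DecidablePred (· ∈ E)]
    (hE : ∀ x, ∀ δ ≠ 0, ¬ ∀ j < m, x + j • φ δ ∈ E) (x : G) :
    ¬ ContainsAP m {t | x + φ t ∈ E} := by
  rintro ⟨a, δ, hδ, -, hmem⟩
  refine hE (x + φ a) δ hδ fun j hj => ?_
  simpa only [mem_filter, mem_univ, true_and, map_add, map_nsmul, add_assoc] using hmem ⟨j, hj⟩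

noncomputable def ZMod.toAddCircleOfPeriod (T : ℝ) (N : ℕ) [NeZero N] : ZMod N →+ AddCircle T :=
  ZMod.lift N ⟨zmultiplesHom _ ((T / N : ℝ) : AddCircle T), by
    rw [zmultiplesHom_apply, natCast_zsmul, ← AddCircle.coe_nsmul, nsmul_eq_mul,
      mul_div_cancel₀ _ (NeZero.ne _), AddCircle.coe_period]⟩

theorem ZMod.toAddCircleOfPeriod_apply (T : ℝ) {N : ℕ} [NeZero N] (t : ZMod N) :
    toAddCircleOfPeriod T N t = ((T * t.val / N : ℝ) : AddCircle T) := by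
  conv_lhs => rw [← ZMod.natCast_zmod_val t, ← Int.cast_natCast]
  rw [toAddCircleOfPeriod, ZMod.lift_coe, Subtype.coe_mk, zmultiplesHom_apply, natCast_zsmul,
    ← AddCircle.coe_nsmul, nsmul_eq_mul, mul_div_assoc']
  ring_nf

theorem avoid_ap_measure_general_general (k N : ℕ) (hk : 3 ≤ k) (hN : 2 ≤ N) (r : ℕ)
    (hr : ∀ B : Finset (ZMod N),
      (¬ ∃ a δ : ZMod N, δ ≠ 0 ∧
        Function.Injective (fun j : Fin (k - 1) => a + (j : ℕ) • δ) ∧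
        ∀ j : Fin (k - 1), a + (j : ℕ) • δ ∈ B) →
      B.card ≤ r)
    (E : Set (AddCircle (2 * Real.pi))) (hE : MeasurableSet E)
    (havoid : ∀ x : AddCircle (2 * Real.pi), ∀ i : ℕ, 1 ≤ i → i ≤ N - 1 →
      ¬ (∀ j : ℕ, j ≤ k - 2 →
        x + (j : ℕ) • ((2 * Real.pi * i / N : ℝ) : AddCircle (2 * Real.pi)) ∈ E)) :
    volume E ≤ ENNReal.ofReal (2 * Real.pi / N * r) := by
  classical
  have : NeZero N := ⟨by omega⟩
  set φ := ZMod.toAddCircleOfPeriod (2 * Real.pi) N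
  have hφavoid : ∀ x, ∀ δ ≠ 0, ¬ ∀ j < k - 1, x + j • φ δ ∈ E := by
    intro x δ hδ hAP
    refine havoid x δ.val (Nat.one_le_iff_ne_zero.mpr ((ZMod.val_ne_zero δ).mpr hδ))
      (Nat.le_sub_one_of_lt (ZMod.val_lt δ)) fun j hj => ?_
    rw [← ZMod.toAddCircleOfPeriod_apply]
    exact hAP j (by omega)
  have hcount (x) : #{t | x + φ t ∈ E} ≤ r :=
    hr _ (ZMod.not_containsAP_filter_translate_mem φ hφavoid x)
  have hmain := card_mul_measure_le_of_forall_card_translates_le volume φ hE hcount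
  rw [ZMod.card, AddCircle.measure_univ] at hmain
  have hN0 : (N : ENNReal) ≠ 0 := Nat.cast_ne_zero.mpr (by omega)
  calc volume E ≤ r * ENNReal.ofReal (2 * Real.pi) / N :=
        (ENNReal.le_div_iff_mul_le (.inl hN0) (.inl (ENNReal.natCast_ne_top N))).mpr
          (by rwa [mul_comm])
    _ = ENNReal.ofReal (2 * Real.pi * r) / N := by
        rw [ENNReal.ofReal_mul' (Nat.cast_nonneg r), ENNReal.ofReal_natCast, mul_comm]
    _ = ENNReal.ofReal (2 * Real.pi / N * r) := by
        rw [div_mul_eq_mul_div, ENNReal.ofReal_div_of_pos (by positivity), ENNReal.ofReal_natCast]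

/-- If `r N` bounds the size of subsets of `ℤ/Nℤ` with no `(k−1)`-term arithmetic
progression, and `E ⊆ ℝ/2πℤ` avoids all `(k−1)`-term progressions with gaps which are
multiples of `2π/N`, then `L¹(E) ≤ (2π/N)·r N`. -/
theorem avoid_ap_measure_general (k N : ℕ) (hk : 3 ≤ k) (hN : 2 ≤ N)
    (hprime : Nat.Prime N) (r : ℕ)
    (hr : ∀ B : Finset (ZMod N),
      (¬ ∃ a δ : ZMod N, δ ≠ 0 ∧
        Function.Injective (fun j : Fin (k - 1) => a + (j : ℕ) • δ) ∧
        ∀ j : Fin (k - 1), a + (j : ℕ) • δ ∈ B) →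
      B.card ≤ r)
    (E : Set (AddCircle (2 * Real.pi))) (hE : MeasurableSet E)
    (havoid : ∀ x : AddCircle (2 * Real.pi), ∀ i : ℕ, 1 ≤ i → i ≤ N - 1 →
      ¬ (∀ j : ℕ, j ≤ k - 2 →
        x + (j : ℕ) • ((2 * Real.pi * i / N : ℝ) : AddCircle (2 * Real.pi)) ∈ E)) :
    volume E ≤ ENNReal.ofReal (2 * Real.pi / N * r) :=
  avoid_ap_measure_general_general k N hk hN r hr E hE havoid
end
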